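/- Let H be a complex Hilbert space, ε > 0, M > 0, K > 0, and let A be a map assigning to each ξ ∈ H a sesquilinear form A(ξ) on H such that: (i) each A(ξ) is bounded with constant M; (ii) each A(ξ) satisfies Im A(ξ)(u, u) ≥ ε‖u‖² for all u ∈ H; (iii) |A(ξ)(u, v) − A(ξ′)(u, v)| ≤ K‖ξ − ξ′‖‖u‖‖v‖ for all ξ, ξ′, u, v ∈ H. Let l be a continuous conjugate-linear functional on H with K‖l‖ < ε². Then there exists a unique ξ ∈ H such that A(ξ)(ξ, v) = l(v) for all v ∈ H. -/

import Mathlib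

/-!
For fixed `ξ`, the real bilinear form `Im A(ξ)` is bounded and coercive, so the real
Lax–Milgram theorem solves `Im A(ξ)(u, ·) = Im l`; for conjugate-linear functionals the
imaginary part determines the real part, so `A(ξ)(u, ·) = l`. Testing the equations for two
parameters against the difference of the solutions gives `‖u‖ ≤ ‖l‖ / ε` and
`‖u - u'‖ ≤ K ‖l‖ / ε² · ‖ξ - ξ'‖`. Hence the solution map `ξ ↦ u` is a contraction when
`K ‖l‖ < ε²`, and its fixed points are exactly the solutions of the nonlinear problem.
-/

section ConjLinear

variable {E : Type*} [AddCommGroup E] [Module ℂ E]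

theorem conjLinear_ext_im {f g : E →ₛₗ[starRingEnd ℂ] ℂ} (h : ∀ v, (f v).im = (g v).im) :
    f = g := by
  ext v
  refine Complex.ext ?_ (h v)
  -- the real part of `f v` is the imaginary part of `f (I • v) = -I * f v`
  simpa [Complex.conj_I, Complex.mul_im] using h (Complex.I • v)

def imLinear (f : E →ₛₗ[starRingEnd ℂ] ℂ) : E →ₗ[ℝ] ℝ where
  toFun v := (f v).im
  map_add' u v := by simp
  map_smul' r v := by
    rw [← Complex.coe_smul, f.map_smulₛₗ]
    simp [Complex.mul_im]

def imBilinear (a : E →ₗ[ℂ] E →ₛₗ[starRingEnd ℂ] ℂ) : E →ₗ[ℝ] E →ₗ[ℝ] ℝ where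
  toFun u := imLinear (a u)
  map_add' u u' := by ext v; simp [imLinear]
  map_smul' r u := by
    ext v
    rw [← Complex.coe_smul]
    simp [imLinear, Complex.mul_im]

end ConjLinear

theorem le_div_of_mul_sq_le_mul {ε x C : ℝ} (hε : 0 < ε) (hC : 0 ≤ C) (hx : 0 ≤ x)
    (h : ε * x ^ 2 ≤ C * x) : x ≤ C / ε := by
  rcases hx.eq_or_lt with rfl | hx
  · positivity
  · rw [le_div_iff₀' hε]
    exact le_of_mul_le_mul_right (by nlinarith) hx

section Sesquilinear

variable {H : Type*} [NormedAddCommGroup H] [InnerProductSpace ℂ H]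

theorem exists_forall_sesq_eq_of_im_coercive [CompleteSpace H]
    (a : H →ₗ[ℂ] H →ₛₗ[starRingEnd ℂ] ℂ) {ε M : ℝ} (hε : 0 < ε)
    (hbdd : ∀ u v, ‖a u v‖ ≤ M * ‖u‖ * ‖v‖) (hcoer : ∀ u, ε * ‖u‖ ^ 2 ≤ (a u u).im)
    (l : H →SL[starRingEnd ℂ] ℂ) : ∃ u, ∀ v, a u v = l v := by
  let : InnerProductSpace ℝ H := InnerProductSpace.complexToReal
  let B : H →L[ℝ] H →L[ℝ] ℝ := (imBilinear a).mkContinuous₂ M fun u v =>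
    (Complex.abs_im_le_norm _).trans (hbdd u v)
  have hB : IsCoercive B := ⟨ε, hε, fun u => by
    simpa [B, imBilinear, imLinear, pow_two, mul_assoc] using hcoer u⟩
  let f : H →L[ℝ] ℝ := (imLinear (l : H →ₛₗ[starRingEnd ℂ] ℂ)).mkContinuous ‖l‖ fun v =>
    (Complex.abs_im_le_norm _).trans (l.le_opNorm v)
  obtain ⟨u, hu⟩ :=
    hB.continuousLinearEquivOfBilin.surjective ((InnerProductSpace.toDual ℝ H).symm f)
  refine ⟨u, fun v => LinearMap.congr_fun (conjLinear_ext_im fun w => ?_) v⟩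
  have := hB.continuousLinearEquivOfBilin_apply u w
  rw [hu, InnerProductSpace.toDual_symm_apply] at this
  exact this.symm

theorem norm_le_of_forall_sesq_eq {a : H →ₗ[ℂ] H →ₛₗ[starRingEnd ℂ] ℂ} {ε : ℝ} (hε : 0 < ε)
    (hcoer : ∀ u, ε * ‖u‖ ^ 2 ≤ (a u u).im) {l : H →SL[starRingEnd ℂ] ℂ} {u : H}
    (hu : ∀ v, a u v = l v) : ‖u‖ ≤ ‖l‖ / ε := by
  refine le_div_of_mul_sq_le_mul hε (norm_nonneg l) (norm_nonneg u) ?_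
  calc ε * ‖u‖ ^ 2 ≤ (l u).im := hu u ▸ hcoer u
    _ ≤ ‖l u‖ := Complex.im_le_norm _
    _ ≤ ‖l‖ * ‖u‖ := l.le_opNorm u

theorem norm_sub_le_of_forall_sesq_eq (A : H → H →ₗ[ℂ] H →ₛₗ[starRingEnd ℂ] ℂ) {ε K : ℝ}
    (hε : 0 < ε) (hK : 0 ≤ K) (hcoer : ∀ ξ u, ε * ‖u‖ ^ 2 ≤ (A ξ u u).im)
    (hlip : ∀ ξ ξ' u v, ‖A ξ u v - A ξ' u v‖ ≤ K * ‖ξ - ξ'‖ * ‖u‖ * ‖v‖)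
    {l : H →SL[starRingEnd ℂ] ℂ} {ξ ξ' u u' : H} (hu : ∀ v, A ξ u v = l v)
    (hu' : ∀ v, A ξ' u' v = l v) : ‖u - u'‖ ≤ K * ‖l‖ / ε ^ 2 * ‖ξ - ξ'‖ := by
  have hd : A ξ (u - u') (u - u') = A ξ' u' (u - u') - A ξ u' (u - u') := by
    rw [map_sub (A ξ) u u', LinearMap.sub_apply, hu, hu']
  have key : ε * ‖u - u'‖ ^ 2 ≤ K * ‖ξ - ξ'‖ * ‖l‖ / ε * ‖u - u'‖ :=
    calc ε * ‖u - u'‖ ^ 2 ≤ ‖A ξ' u' (u - u') - A ξ u' (u - u')‖ :=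
          (hd ▸ hcoer ξ (u - u')).trans (Complex.im_le_norm _)
      _ ≤ K * ‖ξ' - ξ‖ * ‖u'‖ * ‖u - u'‖ := hlip ξ' ξ u' (u - u')
      _ ≤ K * ‖ξ - ξ'‖ * ‖l‖ / ε * ‖u - u'‖ := by
          rw [norm_sub_rev ξ', mul_div_assoc]
          gcongr
          exact norm_le_of_forall_sesq_eq hε (hcoer ξ') hu'
  calc ‖u - u'‖ ≤ K * ‖ξ - ξ'‖ * ‖l‖ / ε / ε :=
        le_div_of_mul_sq_le_mul hε (by positivity) (norm_nonneg _) key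
    _ = K * ‖l‖ / ε ^ 2 * ‖ξ - ξ'‖ := by ring

end Sesquilinear

theorem stmt_6_general {H : Type*} [NormedAddCommGroup H] [InnerProductSpace ℂ H]
    [CompleteSpace H] (ε M K : ℝ) (hε : 0 < ε) (hK : 0 < K)
    (A : H → H →ₗ[ℂ] H →ₛₗ[starRingEnd ℂ] ℂ)
    (hbdd : ∀ ξ u v : H, ‖A ξ u v‖ ≤ M * ‖u‖ * ‖v‖)
    (habs : ∀ ξ u : H, ε * ‖u‖ ^ 2 ≤ (A ξ u u).im)
    (hlip : ∀ ξ ξ' u v : H, ‖A ξ u v - A ξ' u v‖ ≤ K * ‖ξ - ξ'‖ * ‖u‖ * ‖v‖)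
    (l : H →SL[starRingEnd ℂ] ℂ) (hl : K * ‖l‖ < ε ^ 2) :
    ∃! ξ : H, ∀ v : H, A ξ ξ v = l v := by
  choose T hT using fun ξ => exists_forall_sesq_eq_of_im_coercive (A ξ) hε (hbdd ξ) (habs ξ) l
  let c : NNReal := ⟨K * ‖l‖ / ε ^ 2, by positivity⟩
  have hT_contr : ContractingWith c T :=
    ⟨(div_lt_one (by positivity)).2 hl, LipschitzWith.of_dist_le_mul fun ξ ξ' => by
      rw [dist_eq_norm, dist_eq_norm]
      exact norm_sub_le_of_forall_sesq_eq A hε hK.le habs hlip (hT ξ) (hT ξ')⟩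
  refine ⟨hT_contr.fixedPoint T, ?_, fun ξ hξ => hT_contr.fixedPoint_unique ?_⟩
  · simpa only [hT_contr.fixedPoint_isFixedPt.eq] using hT (hT_contr.fixedPoint T)
  · -- `T ξ` and `ξ` both solve the linear problem at `ξ`
    show T ξ = ξ
    simpa [sub_eq_zero] using norm_sub_le_of_forall_sesq_eq A hε hK.le habs hlip (hT ξ) hξ

/-- small-data existence and uniqueness for the regularized nonlinear
fixed-point problem. `A` assigns to each `ξ ∈ H` a sesquilinear form `A(ξ)` (linear in
the first argument, conjugate-linear in the second) on the complex Hilbert space `H`,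
uniformly bounded with constant `M`, with the `ε`-absorption property, and `K`-Lipschitz
in `ξ`. If `l` is a continuous conjugate-linear functional with `K ‖l‖ < ε²`, then there
is a unique `ξ` with `A(ξ)(ξ, v) = l(v)` for all `v`. -/
theorem stmt_6 {H : Type*} [NormedAddCommGroup H] [InnerProductSpace ℂ H]
    [CompleteSpace H] (ε M K : ℝ) (hε : 0 < ε) (hM : 0 < M) (hK : 0 < K)
    (A : H → H →ₗ[ℂ] H →ₛₗ[starRingEnd ℂ] ℂ)
    (hbdd : ∀ ξ u v : H, ‖A ξ u v‖ ≤ M * ‖u‖ * ‖v‖)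
    (habs : ∀ ξ u : H, ε * ‖u‖ ^ 2 ≤ (A ξ u u).im)
    (hlip : ∀ ξ ξ' u v : H, ‖A ξ u v - A ξ' u v‖ ≤ K * ‖ξ - ξ'‖ * ‖u‖ * ‖v‖)
    (l : H →SL[starRingEnd ℂ] ℂ) (hl : K * ‖l‖ < ε ^ 2) :
    ∃! ξ : H, ∀ v : H, A ξ ξ v = l v :=
  stmt_6_general ε M K hε hK A hbdd habs hlip l hl
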